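/- Consider the linear system Ax = b where A ∈ ℝ^{N×N} is symmetric positive definite with distinct eigenvalues 0 < λ_1 < ... < λ_N and orthonormal eigenvectors v_1, ..., v_N. Let the gradient method x_{n+1} = x_n − α̂ g_n, with g_n = A x_n − b, be applied with the constant steplength α̂ = 2/(λ_1 + λ_N). Write g_n = Σ_{i=1}^N ζ_{i,n} v_i and assume ζ_{1,0} ≠ 0. Then lim_{n→∞} ζ_{i,n}/ζ_{1,n} = 0 for i = 2, 3, ..., N−1, while ζ_{N,n}/ζ_{1,n} = (ζ_{N,0}/ζ_{1,0}) (−1)^n for every n. -/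

import Mathlib

open Filter Topology Matrix

/-- With the constant steplength `α̂ = 2/(λ₁ + λ_N)`, the gradient coordinates satisfy:
interior ratios `ζ_{i,n}/ζ_{1,n}` tend to 0, while
`ζ_{N,n}/ζ_{1,n} = (ζ_{N,0}/ζ_{1,0})(−1)ⁿ` for every `n`. -/
theorem constant_step_equality_case
    (N : ℕ) (hN : 2 ≤ N)
    (A : Matrix (Fin N) (Fin N) ℝ) (b : Fin N → ℝ)
    (hA : A.PosDef)
    (lam : Fin N → ℝ) (v : Fin N → Fin N → ℝ)
    (hlam0 : 0 < lam ⟨0, by omega⟩)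
    (hmono : StrictMono lam)
    (heig : ∀ i, A.mulVec (v i) = lam i • v i)
    (horth : ∀ i j, v i ⬝ᵥ v j = if i = j then (1 : ℝ) else 0)
    (ahat : ℝ)
    (hahat : ahat = 2 / (lam ⟨0, by omega⟩ + lam ⟨N - 1, by omega⟩))
    (x g : ℕ → Fin N → ℝ)
    (hg : ∀ n, g n = A.mulVec (x n) - b)
    (hx : ∀ n, x (n + 1) = x n - ahat • g n)
    (zeta : ℕ → Fin N → ℝ)
    (hzeta : ∀ n, g n = ∑ i, zeta n i • v i)
    (hz1 : zeta 0 ⟨0, by omega⟩ ≠ 0) :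
    (∀ i : Fin N, 0 < i.1 → i.1 < N - 1 →
      Tendsto (fun n => zeta n i / zeta n ⟨0, by omega⟩) atTop (𝓝 0)) ∧
    ∀ n, zeta n ⟨N - 1, by omega⟩ / zeta n ⟨0, by omega⟩ =
      (zeta 0 ⟨N - 1, by omega⟩ / zeta 0 ⟨0, by omega⟩) * (-1) ^ n := by
  set i0 : Fin N := ⟨0, by omega⟩ with hi0
  set iN : Fin N := ⟨N - 1, by omega⟩ with hiN
  have hsymm : Aᵀ = A := by
    have := hA.1
    simpa [Matrix.IsHermitian, Matrix.conjTranspose_eq_transpose_of_trivial] using this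
  -- coefficients are dot products
  have hcoef : ∀ n i, zeta n i = g n ⬝ᵥ v i := by
    intro n i
    rw [hzeta n]
    simp only [dotProduct, Finset.sum_apply, Pi.smul_apply, smul_eq_mul, Finset.sum_mul]
    rw [Finset.sum_comm]
    have h2 : ∀ j, ∑ k, zeta n j * v j k * v i k = zeta n j * (if j = i then (1:ℝ) else 0) := by
      intro j; rw [← horth j i]; simp [dotProduct, Finset.mul_sum, mul_assoc]
    simp [h2, Finset.sum_ite_eq', Finset.mem_univ]
  -- recurrence for g
  have hgrec : ∀ n, g (n + 1) = g n - ahat • A.mulVec (g n) := by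
    intro n
    rw [hg (n + 1), hx n, hg n]
    ext j
    simp [Matrix.mulVec_sub, Matrix.mulVec_smul, Pi.sub_apply, Pi.smul_apply]
    ring
  -- recurrence for zeta
  have hzrec : ∀ n i, zeta (n + 1) i = (1 - ahat * lam i) * zeta n i := by
    intro n i
    rw [hcoef (n + 1) i, hgrec n, sub_dotProduct, smul_dotProduct]
    have hAg : A.mulVec (g n) ⬝ᵥ v i = lam i * (g n ⬝ᵥ v i) := by
      rw [dotProduct_comm, Matrix.dotProduct_mulVec, ← Matrix.mulVec_transpose,
        hsymm, heig i, smul_dotProduct, dotProduct_comm]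
      simp [mul_comm]
    rw [hAg, hcoef n i]
    simp [smul_eq_mul]
    ring
  have hzclosed : ∀ n i, zeta n i = (1 - ahat * lam i) ^ n * zeta 0 i := by
    intro n i
    induction n with
    | zero => simp
    | succ k ih => rw [hzrec k i, ih]; ring
  -- arithmetic setup
  set a := lam i0 with ha
  set c := lam iN with hc
  have hi0N : i0 < iN := by
    simp only [Fin.lt_def, hi0, hiN]; omega
  have hac : a < c := hmono hi0N
  have hapc : 0 < a + c := by nlinarith
  have hr1 : 1 - ahat * a = (c - a) / (a + c) := by
    rw [hahat]; field_simp; ring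
  have hrN : 1 - ahat * c = -((c - a) / (a + c)) := by
    rw [hahat]; field_simp; ring
  set r : ℝ := (c - a) / (a + c) with hr
  clear_value r
  have hrpos : 0 < r := hr ▸ div_pos (by linarith) hapc
  have hrne : r ≠ 0 := ne_of_gt hrpos
  have hz1n : ∀ n, zeta n i0 = r ^ n * zeta 0 i0 := by
    intro n; rw [hzclosed n i0, ← ha, hr1]
  have hz1nne : ∀ n, zeta n i0 ≠ 0 := by
    intro n; rw [hz1n n]
    exact mul_ne_zero (pow_ne_zero _ hrne) hz1
  constructor
  · intro i hi1 hi2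
    have hia : a < lam i := hmono (by simp [Fin.lt_def, hi0]; omega)
    have hic : lam i < c := hmono (by simp [Fin.lt_def, hiN]; omega)
    set s := 1 - ahat * lam i with hs
    have hs' : s = (a + c - 2 * lam i) / (a + c) := by
      rw [hs, hahat]; field_simp
    have habs : |s| < r := by
      rw [hs', hr, abs_div, abs_of_pos hapc, div_lt_div_iff₀ hapc hapc]
      have : |a + c - 2 * lam i| < c - a := by
        rw [abs_lt]; constructor <;> linarith
      nlinarith [abs_nonneg (a + c - 2 * lam i)]
    have key : ∀ n, zeta n i / zeta n i0 = (s / r) ^ n * (zeta 0 i / zeta 0 i0) := by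
      intro n
      rw [hzclosed n i, hz1n n, ← hs, div_pow]
      field_simp
    apply Tendsto.congr (fun n => (key n).symm)
    rw [show (0 : ℝ) = 0 * (zeta 0 i / zeta 0 i0) by ring]
    apply Tendsto.mul_const
    apply tendsto_pow_atTop_nhds_zero_of_abs_lt_one
    rw [abs_div, abs_of_pos hrpos, div_lt_one hrpos]
    exact habs
  · intro n
    rw [hzclosed n iN, hz1n n, ← hc, hrN, neg_pow]
    rw [mul_comm ((-1:ℝ)^n) (r^n), mul_assoc, mul_div_mul_left _ _ (pow_ne_zero n hrne)]
    ring
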